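/- With the setup of constrained-path AFQMC importance sampling: if ⟨Ψ_tr, B(x)Φ⟩ ≤ 0 for some x (a sign problem occurs), then for any x with P̃(x) > 0, the difference ⟨Ψ_tr, B̃(x)Φ⟩ − ⟨Ψ_tr, exp(-ΔτH)Φ⟩ equals −Σ_{x : P̃(x)=0} P(x)·⟨Ψ_tr, B(x)Φ⟩, and this quantity is ≥ 0. Hence the constrained-path walker overlap is systematically biased upward relative to the exact propagation. -/

import Mathlib

/-!
Write `o y = ⟨Ψtr, B(y)Φ⟩` and `c = N ⟨Ψtr, Φ⟩`. Then `c = ∑ max(o y, 0) P(y)`, and every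
walker with `P̃(x) > 0` has overlap `(P(x)/P̃(x)) o x = c` exactly, while the exact overlap is
`∑ P(y) o y`. Their difference `∑ (max(o y, 0) - o y) P(y)` is a sum of nonnegative terms, and
the only nonzero ones come from the discarded `y`, those with `P̃(y) = 0`.
-/

open scoped Matrix

theorem Matrix.dotProduct_sum_smul_mulVec {ι m n α : Type*} [Fintype m] [Fintype n]
    [CommSemiring α] (s : Finset ι) (c : ι → α) (A : ι → Matrix m n α) (u : m → α)
    (v : n → α) :
    u ⬝ᵥ (∑ i ∈ s, c i • A i) *ᵥ v = ∑ i ∈ s, c i * (u ⬝ᵥ A i *ᵥ v) := by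
  simp only [Matrix.sum_mulVec, dotProduct_sum, Matrix.smul_mulVec, dotProduct_smul,
    smul_eq_mul]

theorem pos_of_max_zero_mul_ne_zero {α : Type*} [MulZeroClass α] [LinearOrder α] {a p : α}
    (h : max a 0 * p ≠ 0) : 0 < a := by
  by_contra! ha
  simp [max_eq_right ha] at h

theorem max_zero_sub_mul_eq_neg_ite {α : Type*} [CommRing α] [NoZeroDivisors α] [LinearOrder α]
    (a p : α) :
    (max a 0 - a) * p = -(if max a 0 * p = 0 then p * a else 0) := by
  split_ifs with h
  · rcases mul_eq_zero.mp h with hmax | hp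
    · rw [hmax]; ring
    · rw [hp]; ring
  · rw [max_eq_left (pos_of_max_zero_mul_ne_zero h).le]; ring

noncomputable def constrainedWeight {X : Type*} (o P : X → ℝ) (c : ℝ) (y : X) : ℝ :=
  max (o y) 0 * P y / c

section constrainedWeight

variable {X : Type*} {o P : X → ℝ} {c : ℝ} {x : X}

theorem constrainedWeight_eq_zero_iff (hc : c ≠ 0) (y : X) :
    constrainedWeight o P c y = 0 ↔ max (o y) 0 * P y = 0 := by
  rw [constrainedWeight, div_eq_zero_iff, or_iff_left hc]

theorem ne_zero_of_constrainedWeight_ne_zero (hx : constrainedWeight o P c x ≠ 0) : c ≠ 0 :=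
  fun hc => hx (by rw [constrainedWeight, hc, div_zero])

theorem div_constrainedWeight_mul_eq (hx : constrainedWeight o P c x ≠ 0) :
    P x / constrainedWeight o P c x * o x = c := by
  have hc := ne_zero_of_constrainedWeight_ne_zero hx
  have hkept : max (o x) 0 * P x ≠ 0 := (constrainedWeight_eq_zero_iff hc x).not.mp hx
  have hox : 0 < o x := pos_of_max_zero_mul_ne_zero hkept
  have hPx : P x ≠ 0 := (mul_ne_zero_iff.mp hkept).2
  rw [constrainedWeight, max_eq_left hox.le]
  field_simp [hox.ne']

variable [Fintype X]

theorem div_constrainedWeight_mul_sub_sum_eq (hc : c = ∑ y, max (o y) 0 * P y)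
    (hx : constrainedWeight o P c x ≠ 0) :
    P x / constrainedWeight o P c x * o x - ∑ y, P y * o y
      = ∑ y, (max (o y) 0 - o y) * P y := by
  rw [div_constrainedWeight_mul_eq hx, hc, ← Finset.sum_sub_distrib]
  exact Finset.sum_congr rfl fun y _ => by ring

theorem div_constrainedWeight_mul_sub_sum_eq_neg_sum_ite (hc : c = ∑ y, max (o y) 0 * P y)
    (hx : constrainedWeight o P c x ≠ 0) :
    P x / constrainedWeight o P c x * o x - ∑ y, P y * o y
      = -∑ y, if constrainedWeight o P c y = 0 then P y * o y else 0 := by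
  simp only [div_constrainedWeight_mul_sub_sum_eq hc hx, max_zero_sub_mul_eq_neg_ite,
    Finset.sum_neg_distrib, constrainedWeight_eq_zero_iff (ne_zero_of_constrainedWeight_ne_zero hx)]

theorem sum_mul_le_div_constrainedWeight_mul (hP : ∀ y, 0 ≤ P y)
    (hc : c = ∑ y, max (o y) 0 * P y) (hx : constrainedWeight o P c x ≠ 0) :
    ∑ y, P y * o y ≤ P x / constrainedWeight o P c x * o x := by
  rw [← sub_nonneg, div_constrainedWeight_mul_sub_sum_eq hc hx]
  exact Finset.sum_nonneg fun y _ => mul_nonneg (sub_nonneg.mpr (le_max_left _ _)) (hP y)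

end constrainedWeight

theorem cpAFQMC_sign_problem_bias_general {n : ℕ} {X : Type*} [Fintype X]
    (H : Matrix (Fin n) (Fin n) ℝ) (Δτ : ℝ)
    (P : X → ℝ) (hP0 : ∀ x, 0 ≤ P x)
    (B : X → Matrix (Fin n) (Fin n) ℝ)
    (hdecomp : NormedSpace.exp (-(Δτ • H)) = ∑ x, P x • B x)
    (Ψtr Φ : Fin n → ℝ)
    (N : ℝ)
    (hN : N = ∑ x, (max (Ψtr ⬝ᵥ (B x).mulVec Φ) 0 / (Ψtr ⬝ᵥ Φ)) * P x)
    (Ptilde : X → ℝ)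
    (hPt : ∀ x, Ptilde x = (1 / N) * (max (Ψtr ⬝ᵥ (B x).mulVec Φ) 0 / (Ψtr ⬝ᵥ Φ)) * P x) :
    ∀ x, 0 < Ptilde x →
      (Ψtr ⬝ᵥ ((P x / Ptilde x) • B x).mulVec Φ
          - Ψtr ⬝ᵥ (NormedSpace.exp (-(Δτ • H))).mulVec Φ
        = -(∑ y, if Ptilde y = 0 then P y * (Ψtr ⬝ᵥ (B y).mulVec Φ) else 0)) ∧
      0 ≤ Ψtr ⬝ᵥ ((P x / Ptilde x) • B x).mulVec Φ
          - Ψtr ⬝ᵥ (NormedSpace.exp (-(Δτ • H))).mulVec Φ := by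
  intro x hx
  set o : X → ℝ := fun y => Ψtr ⬝ᵥ B y *ᵥ Φ
  have hPt' : Ptilde = constrainedWeight o P (N * (Ψtr ⬝ᵥ Φ)) :=
    funext fun y => by rw [hPt, constrainedWeight]; ring
  rw [hPt'] at hx ⊢
  have hO : Ψtr ⬝ᵥ Φ ≠ 0 := (mul_ne_zero_iff.mp (ne_zero_of_constrainedWeight_ne_zero hx.ne')).2
  have hc : N * (Ψtr ⬝ᵥ Φ) = ∑ y, max (o y) 0 * P y := by
    rw [hN, Finset.sum_mul]
    exact Finset.sum_congr rfl fun y _ => by rw [div_mul_eq_mul_div, div_mul_cancel₀ _ hO]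
  have hwalker : Ψtr ⬝ᵥ ((P x / constrainedWeight o P (N * (Ψtr ⬝ᵥ Φ)) x) • B x) *ᵥ Φ
      = P x / constrainedWeight o P (N * (Ψtr ⬝ᵥ Φ)) x * o x := by
    rw [Matrix.smul_mulVec, dotProduct_smul, smul_eq_mul]
  have hexact : Ψtr ⬝ᵥ NormedSpace.exp (-(Δτ • H)) *ᵥ Φ = ∑ y, P y * o y := by
    rw [hdecomp, Matrix.dotProduct_sum_smul_mulVec]
  rw [hwalker, hexact]
  exact ⟨div_constrainedWeight_mul_sub_sum_eq_neg_sum_ite hc hx.ne',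
    sub_nonneg.mpr (sum_mul_le_div_constrainedWeight_mul hP0 hc hx.ne')⟩

/-- With a sign problem, the constrained-path walker overlap is biased upward relative to
exact propagation, by exactly minus the discarded contributions. -/
theorem cpAFQMC_sign_problem_bias {n : ℕ} {X : Type*} [Fintype X]
    (H : Matrix (Fin n) (Fin n) ℝ) (hH : H.IsSymm) (Δτ : ℝ) (hΔτ : 0 < Δτ)
    (P : X → ℝ) (hP0 : ∀ x, 0 ≤ P x) (hP1 : ∑ x, P x = 1)
    (B : X → Matrix (Fin n) (Fin n) ℝ)
    (hdecomp : NormedSpace.exp (-(Δτ • H)) = ∑ x, P x • B x)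
    (Ψtr Φ : Fin n → ℝ) (hΦ : 0 < Ψtr ⬝ᵥ Φ)
    (hsign : ∃ x, Ψtr ⬝ᵥ (B x).mulVec Φ ≤ 0)
    (N : ℝ) (hNpos : 0 < N)
    (hN : N = ∑ x, (max (Ψtr ⬝ᵥ (B x).mulVec Φ) 0 / (Ψtr ⬝ᵥ Φ)) * P x)
    (Ptilde : X → ℝ)
    (hPt : ∀ x, Ptilde x = (1 / N) * (max (Ψtr ⬝ᵥ (B x).mulVec Φ) 0 / (Ψtr ⬝ᵥ Φ)) * P x) :
    ∀ x, 0 < Ptilde x →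
      (Ψtr ⬝ᵥ ((P x / Ptilde x) • B x).mulVec Φ
          - Ψtr ⬝ᵥ (NormedSpace.exp (-(Δτ • H))).mulVec Φ
        = -(∑ y, if Ptilde y = 0 then P y * (Ψtr ⬝ᵥ (B y).mulVec Φ) else 0)) ∧
      0 ≤ Ψtr ⬝ᵥ ((P x / Ptilde x) • B x).mulVec Φ
          - Ψtr ⬝ᵥ (NormedSpace.exp (-(Δτ • H))).mulVec Φ :=
  cpAFQMC_sign_problem_bias_general H Δτ P hP0 B hdecomp Ψtr Φ N hN Ptilde hPt
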